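/- arXiv:2510.08129 — 4 statements merged into one kernel-verified Lean document; each statement's English description precedes it below -/
import Mathlib

section
/- Let k ≥ 1 be an integer, C ≥ 0, and a₁,…,a_k ∈ ℝ, and define f(x) := Σ_{i=1}^{k} a_i 2^{−i x}. If |f(j)| ≤ C for every integer j with 1 ≤ j ≤ k, then |a_i| ≤ 30 · C · 2^{i k} for every i ∈ {1,…,k}. -/
/-!
The values `f j = ∑ₘ aₘ xₘ ^ j` at the nodes `xₘ = 2⁻ᵐ` form a Vandermonde-type system.
Combining them with the coefficients of `∏_{n ≠ i} (X - xₙ)` isolates `aᵢ xᵢ ∏_{n ≠ i} (xᵢ - xₙ)`,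
and those coefficients have `ℓ¹`-norm at most `∏ (1 + xₙ) < e`. After scaling by `2 ^ i`, the gaps
to the nodes `n < i` are at least `1`, and those to the nodes `n > i` are `1 - 2^{-(n - i)}`, whose
product is at least `1/4`. This gives `|aᵢ| ≤ 12 C 2^{ik}`.
-/

open Finset Real

theorem abs_sum_mul_prod_sub_le {ι : Type*} (s t : Finset ι) (b x : ι → ℝ) (C : ℝ)
    (h : ∀ j ≤ #t, |∑ m ∈ s, b m * x m ^ j| ≤ C) :
    |∑ m ∈ s, b m * ∏ n ∈ t, (x m - x n)| ≤ C * ∏ n ∈ t, (1 + |x n|) := by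
  classical
  have expand (m : ι) :
      ∏ n ∈ t, (x m - x n) = ∑ u ∈ t.powerset, x m ^ #u * ∏ n ∈ t \ u, -x n := by
    simp_rw [sub_eq_add_neg, prod_add, prod_const]
  calc |∑ m ∈ s, b m * ∏ n ∈ t, (x m - x n)|
      = |∑ u ∈ t.powerset, (∏ n ∈ t \ u, -x n) * ∑ m ∈ s, b m * x m ^ #u| := by
        simp_rw [expand, mul_sum]
        rw [sum_comm]
        congr! 3
        ring
    _ ≤ ∑ u ∈ t.powerset, (∏ n ∈ t \ u, |x n|) * C := by
        refine (abs_sum_le_sum_abs _ _).trans (sum_le_sum fun u hu => ?_)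
        rw [abs_mul, abs_prod]
        simp_rw [abs_neg]
        exact mul_le_mul_of_nonneg_left (h _ (card_le_card (mem_powerset.1 hu))) (by positivity)
    _ = C * ∏ n ∈ t, (1 + |x n|) := by
        rw [prod_add, ← sum_mul, mul_comm]
        simp

theorem abs_mul_prod_sub_le {ι : Type*} [DecidableEq ι] {s : Finset ι} {i : ι} (hi : i ∈ s)
    (b x : ι → ℝ) (C : ℝ) (h : ∀ j < #s, |∑ m ∈ s, b m * x m ^ j| ≤ C) :
    |b i| * ∏ n ∈ s.erase i, |x i - x n| ≤ C * ∏ n ∈ s.erase i, (1 + |x n|) := by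
  have hs := card_pos.2 ⟨i, hi⟩
  have := abs_sum_mul_prod_sub_le s (s.erase i) b x C fun j hj =>
    h j (by rw [card_erase_of_mem hi] at hj; omega)
  rwa [sum_eq_single_of_mem i hi fun m hm hmi => by
    rw [prod_eq_zero (mem_erase.2 ⟨hmi, hm⟩) (sub_self _), mul_zero], abs_mul, abs_prod] at this

theorem pow_card_mul_prod_erase {ι M : Type*} [CommMonoid M] [DecidableEq ι] {s : Finset ι}
    {i : ι} (hi : i ∈ s) (c : M) (g : ι → M) :
    c ^ #s * ∏ n ∈ s.erase i, g n = c * ∏ n ∈ s.erase i, c * g n := by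
  rw [prod_mul_distrib, prod_const, card_erase_of_mem hi, ← mul_assoc, ← pow_succ',
    Nat.sub_add_cancel (card_pos.2 ⟨i, hi⟩)]

theorem sum_Icc_inv_two_pow (k : ℕ) : ∑ n ∈ Icc 1 k, ((2 : ℝ) ^ n)⁻¹ = 1 - ((2 : ℝ) ^ k)⁻¹ := by
  induction k with
  | zero => simp
  | succ k ih =>
    rw [sum_Icc_succ_top (by omega), ih, pow_succ]
    ring

theorem prod_one_add_inv_two_pow_lt_three {s : Finset ℕ} {k : ℕ} (hs : s ⊆ Icc 1 k) :
    ∏ n ∈ s, (1 + ((2 : ℝ) ^ n)⁻¹) < 3 :=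
  calc ∏ n ∈ s, (1 + ((2 : ℝ) ^ n)⁻¹)
      ≤ exp (∑ n ∈ s, ((2 : ℝ) ^ n)⁻¹) := prod_one_add_le_exp_sum s fun n => by positivity
    _ ≤ exp 1 := by
        gcongr
        calc ∑ n ∈ s, ((2 : ℝ) ^ n)⁻¹ ≤ ∑ n ∈ Icc 1 k, ((2 : ℝ) ^ n)⁻¹ :=
              sum_le_sum_of_subset_of_nonneg hs fun n _ _ => by positivity
          _ ≤ 1 := by rw [sum_Icc_inv_two_pow]; simp
    _ < 3 := exp_one_lt_three

theorem quarter_le_prod_range_one_sub_inv_two_pow (n : ℕ) :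
    1 / 4 ≤ ∏ d ∈ range n, (1 - ((2 : ℝ) ^ (d + 1))⁻¹) := by
  -- the slack `2⁻¹ ^ (n + 2)` is what makes the induction go through
  have key (n : ℕ) :
      1 / 4 + 2⁻¹ ^ (n + 2) ≤ ∏ d ∈ range (n + 1), (1 - ((2 : ℝ) ^ (d + 1))⁻¹) := by
    induction n with
    | zero => norm_num
    | succ n ih =>
      set v : ℝ := 2⁻¹ ^ (n + 2)
      have hv : v ≤ 1 / 4 :=
        (pow_le_pow_of_le_one (by norm_num) (by norm_num) (by omega : 2 ≤ n + 2)).trans_eq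
          (by norm_num)
      have hfactor : 1 - ((2 : ℝ) ^ (n + 1 + 1))⁻¹ = 1 - v := by simp [v, inv_pow]
      rw [prod_range_succ, hfactor, show (2⁻¹ : ℝ) ^ (n + 1 + 2) = v / 2 by ring]
      have hv0 : 0 ≤ v := by positivity
      nlinarith [mul_le_mul_of_nonneg_right ih (by linarith : 0 ≤ 1 - v),
        mul_nonneg hv0 (by linarith : 0 ≤ 1 / 4 - v)]
  rcases n with _ | n
  · norm_num
  · exact le_of_add_le_of_nonneg_left (key n) (by positivity)

theorem quarter_le_prod_two_pow_mul_abs_inv_sub_inv (i k : ℕ) :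
    1 / 4 ≤ ∏ n ∈ (Icc 1 k).erase i, (2 : ℝ) ^ i * |((2 : ℝ) ^ i)⁻¹ - ((2 : ℝ) ^ n)⁻¹| := by
  have scale (n : ℕ) :
      (2 : ℝ) ^ i * |((2 : ℝ) ^ i)⁻¹ - ((2 : ℝ) ^ n)⁻¹| = |1 - (2 : ℝ) ^ i / 2 ^ n| := by
    rw [show 1 - (2 : ℝ) ^ i / 2 ^ n = 2 ^ i * ((2 ^ i)⁻¹ - (2 ^ n)⁻¹) by field_simp, abs_mul,
      abs_of_pos (by positivity : (0 : ℝ) < 2 ^ i)]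
  have far (d : ℕ) :
      (2 : ℝ) ^ i * |((2 : ℝ) ^ i)⁻¹ - ((2 : ℝ) ^ (i + 1 + d))⁻¹| = 1 - ((2 : ℝ) ^ (d + 1))⁻¹ := by
    have hd : ((2 : ℝ) ^ (d + 1))⁻¹ ≤ 1 := inv_le_one_of_one_le₀ (one_le_pow₀ (by norm_num))
    rw [scale, show (2 : ℝ) ^ i / 2 ^ (i + 1 + d) = (2 ^ (d + 1))⁻¹ by field_simp; ring,
      abs_of_nonneg (by linarith)]
  have near (n : ℕ) (hn : n < i) : 1 ≤ (2 : ℝ) ^ i * |((2 : ℝ) ^ i)⁻¹ - ((2 : ℝ) ^ n)⁻¹| := by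
    obtain ⟨e, rfl⟩ := Nat.exists_eq_add_of_lt hn
    have he : (2 : ℝ) ≤ 2 ^ (e + 1) := le_self_pow₀ (by norm_num) (by omega)
    rw [scale, show (2 : ℝ) ^ (n + e + 1) / 2 ^ n = 2 ^ (e + 1) by field_simp; ring]
    exact le_abs.2 (Or.inr (by linarith))
  calc (1 / 4 : ℝ)
      ≤ ∏ d ∈ range (k - i), (1 - ((2 : ℝ) ^ (d + 1))⁻¹) :=
        quarter_le_prod_range_one_sub_inv_two_pow _
    _ = ∏ n ∈ Ioc i k, (2 : ℝ) ^ i * |((2 : ℝ) ^ i)⁻¹ - ((2 : ℝ) ^ n)⁻¹| := by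
        rw [← Ico_add_one_add_one_eq_Ioc, prod_Ico_eq_prod_range, Nat.add_sub_add_right]
        simp only [far]
    _ ≤ ∏ n ∈ (Icc 1 k).erase i, (2 : ℝ) ^ i * |((2 : ℝ) ^ i)⁻¹ - ((2 : ℝ) ^ n)⁻¹| := by
        refine prod_le_prod_of_subset_of_one_le ?_ (fun n _ => by positivity) fun n hn hn' => ?_
        · intro n hn
          simp only [mem_Ioc, mem_erase, mem_Icc] at hn ⊢
          omega
        · simp only [mem_Ioc, mem_erase, mem_Icc] at hn hn'
          exact near n (by omega)

theorem coeff_bound_from_integer_values_general (k : ℕ) (C : ℝ)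
    (a : ℕ → ℝ)
    (h : ∀ j ∈ Finset.Icc 1 k,
      |∑ i ∈ Finset.Icc 1 k, a i * ((2 : ℝ) ^ (i * j))⁻¹| ≤ C) :
    ∀ i ∈ Finset.Icc 1 k, |a i| ≤ 30 * C * 2 ^ (i * k) := by
  intro i hi
  set x : ℕ → ℝ := fun n => ((2 : ℝ) ^ n)⁻¹
  set t := (Icc 1 k).erase i
  have hC : 0 ≤ C := (abs_nonneg _).trans (h i hi)
  have moments (j : ℕ) (hj : j < #(Icc 1 k)) : |∑ m ∈ Icc 1 k, a m * x m * x m ^ j| ≤ C := by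
    rw [sum_congr rfl fun m _ => by rw [mul_assoc, ← pow_succ', inv_pow, ← pow_mul]]
    exact h (j + 1) (by simp at hj ⊢; omega)
  have lagrange := abs_mul_prod_sub_le hi (fun m => a m * x m) x C moments
  have rescale : (2 : ℝ) ^ (i * k) * (x i * ∏ n ∈ t, |x i - x n|)
      = ∏ n ∈ t, (2 : ℝ) ^ i * |x i - x n| := by
    have hcard : #(Icc 1 k) = k := by simp
    have hxi : x i * 2 ^ i = 1 := inv_mul_cancel₀ (by positivity)
    rw [mul_left_comm, pow_mul, ← hcard, pow_card_mul_prod_erase hi, ← mul_assoc, hxi, one_mul]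
  have hdist := quarter_le_prod_two_pow_mul_abs_inv_sub_inv i k
  have hnodes := prod_one_add_inv_two_pow_lt_three (erase_subset i (Icc 1 k))
  have hx (n : ℕ) : |x n| = x n := abs_of_pos (by positivity)
  simp only [hx, abs_mul] at lagrange
  calc |a i| ≤ |a i| * (4 * ∏ n ∈ t, (2 : ℝ) ^ i * |x i - x n|) :=
        le_mul_of_one_le_right (abs_nonneg _) (by linarith)
    _ = 4 * 2 ^ (i * k) * (|a i| * x i * ∏ n ∈ t, |x i - x n|) := by rw [← rescale]; ring
    _ ≤ 4 * 2 ^ (i * k) * (C * 3) :=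
        mul_le_mul_of_nonneg_left
          (lagrange.trans (mul_le_mul_of_nonneg_left hnodes.le hC)) (by positivity)
    _ ≤ 30 * C * 2 ^ (i * k) := by nlinarith [pow_pos (two_pos : (0 : ℝ) < 2) (i * k)]

/-- If `f(x) = ∑_{i=1}^k a_i 2^{-i x}` satisfies `|f(j)| ≤ C` at every integer
`1 ≤ j ≤ k`, then each coefficient satisfies `|a_i| ≤ 30 · C · 2^{i k}`. -/
theorem coeff_bound_from_integer_values (k : ℕ) (hk : 1 ≤ k) (C : ℝ) (hC : 0 ≤ C)
    (a : ℕ → ℝ)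
    (h : ∀ j ∈ Finset.Icc 1 k,
      |∑ i ∈ Finset.Icc 1 k, a i * ((2 : ℝ) ^ (i * j))⁻¹| ≤ C) :
    ∀ i ∈ Finset.Icc 1 k, |a i| ≤ 30 * C * 2 ^ (i * k) :=
  coeff_bound_from_integer_values_general k C a h
end

section
/- Let k ≥ 1 and let M be the k×k real matrix with entries M_{ij} = 2^{−ij} for 1 ≤ i, j ≤ k. Then M is invertible, and for every i ∈ {1,…,k}, Σ_{j=1}^{k} |(M^{−1})_{ij}| ≤ 30 · 2^{ki − i(i−1)/2}. -/
open Polynomial Finset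

namespace VandAux

noncomputable def b (n : ℕ) : ℝ := ((2:ℝ) ^ (n+1))⁻¹

lemma b_pos (n : ℕ) : 0 < b n := by unfold b; positivity

lemma b_le_half (n : ℕ) : b n ≤ 1/2 := by
  unfold b
  rw [inv_le_comm₀ (by positivity) (by norm_num)]
  calc ((1:ℝ)/2)⁻¹ = 2^1 := by norm_num
  _ ≤ 2^(n+1) := by
    apply pow_le_pow_right₀ (by norm_num); omega

lemma b_succ (n : ℕ) : b (n+1) = b n / 2 := by
  unfold b; rw [pow_succ]; field_simp

lemma lb_aux : ∀ n, 4 ≤ n →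
    (4725/16384 : ℝ) + (315/1024) * ((2:ℝ)^n)⁻¹ ≤ ∏ t ∈ range n, (1 - b t) := by
  intro n hn
  induction n, hn using Nat.le_induction with
  | base => norm_num [prod_range_succ, b]
  | succ n hn ih =>
    rw [prod_range_succ]
    have hx1 : ((2:ℝ)^n)⁻¹ ≤ ((2:ℝ)^4)⁻¹ := by
      apply inv_anti₀ (by positivity)
      apply pow_le_pow_right₀ (by norm_num) hn
    have hx0 : (0:ℝ) < ((2:ℝ)^n)⁻¹ := by positivity
    have hb : b n = ((2:ℝ)^n)⁻¹ / 2 := by unfold b; rw [pow_succ]; field_simp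
    have hb2 : ((2:ℝ)^(n+1))⁻¹ = ((2:ℝ)^n)⁻¹ / 2 := by rw [pow_succ]; field_simp
    norm_num at hx1
    nlinarith [ih]

lemma prod_one_sub_ge (n : ℕ) : (4725/16384 : ℝ) ≤ ∏ t ∈ range n, (1 - b t) := by
  rcases le_or_gt 4 n with h | h
  · have := lb_aux n h
    have hx0 : (0:ℝ) < ((2:ℝ)^n)⁻¹ := by positivity
    nlinarith
  · interval_cases n <;> norm_num [prod_range_succ, b]

lemma ub_aux : ∀ n, 5 ≤ n →
    ∏ t ∈ range n, (1 + b t) ≤ (75735/31744 : ℝ) * (1 - ((2:ℝ)^n)⁻¹) := by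
  intro n hn
  induction n, hn using Nat.le_induction with
  | base => norm_num [prod_range_succ, b]
  | succ n hn ih =>
    rw [prod_range_succ]
    have hx1 : ((2:ℝ)^n)⁻¹ ≤ ((2:ℝ)^5)⁻¹ := by
      apply inv_anti₀ (by positivity)
      apply pow_le_pow_right₀ (by norm_num) hn
    have hx0 : (0:ℝ) < ((2:ℝ)^n)⁻¹ := by positivity
    have hb : b n = ((2:ℝ)^n)⁻¹ / 2 := by unfold b; rw [pow_succ]; field_simp
    have hb2 : ((2:ℝ)^(n+1))⁻¹ = ((2:ℝ)^n)⁻¹ / 2 := by rw [pow_succ]; field_simp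
    norm_num at hx1
    nlinarith [ih, b_pos n]

lemma prod_one_add_le (n : ℕ) : ∏ t ∈ range n, (1 + b t) ≤ (75735/31744 : ℝ) := by
  rcases le_or_gt 5 n with h | h
  · have := ub_aux n h
    have hx0 : (0:ℝ) < ((2:ℝ)^n)⁻¹ := by positivity
    nlinarith
  · interval_cases n <;> norm_num [prod_range_succ, b]


lemma abs_coeff_eq {s : Finset ℕ} {f : ℕ → ℝ} (hf : ∀ m ∈ s, 0 ≤ f m) {r : ℕ}
    (hr : r ≤ s.card) :
    |(∏ m ∈ s, (X - C (f m))).coeff r| = (∏ m ∈ s, (X + C (f m))).coeff r := by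
  have hcard : Multiset.card (s.1.map f) = s.card := by simp
  have h1 : (∏ m ∈ s, (X - C (f m))) = ((s.1.map f).map fun t => X - C t).prod := by
    rw [Multiset.map_map]; rfl
  have h1' : (∏ m ∈ s, (X + C (f m))) = ((s.1.map f).map fun t => X + C t).prod := by
    rw [Multiset.map_map]; rfl
  have h2 := Multiset.prod_X_sub_C_coeff (s.1.map f) (k := r) (by rw [hcard]; exact hr)
  have h3 := Multiset.prod_X_add_C_coeff (s.1.map f) (k := r) (by rw [hcard]; exact hr)
  have h4 : 0 ≤ (s.1.map f).esymm (Multiset.card (s.1.map f) - r) := by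
    apply Multiset.sum_nonneg
    intro x hx
    obtain ⟨t, ht, rfl⟩ := Multiset.mem_map.mp hx
    apply Multiset.prod_nonneg
    intro a ha
    have : a ∈ s.1.map f :=
      Multiset.mem_of_le (Multiset.mem_powersetCard.mp ht).1 ha
    obtain ⟨m, hm, rfl⟩ := Multiset.mem_map.mp this
    exact hf m hm
  rw [h1, h1', h2, h3, abs_mul, abs_pow, abs_neg, abs_one, one_pow, one_mul,
    abs_of_nonneg h4]


lemma b_strictAnti : StrictAnti b := by
  intro m n h
  unfold b
  apply inv_strictAnti₀ (by positivity)
  exact pow_lt_pow_right₀ (by norm_num) (by omega)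

noncomputable def P (k i : ℕ) : ℝ[X] := ∏ m ∈ (range k).erase i, (X - C (b m))
noncomputable def Q (k i : ℕ) : ℝ[X] := ∏ m ∈ (range k).erase i, (X + C (b m))
noncomputable def D (k i : ℕ) : ℝ := ∏ m ∈ (range k).erase i, (b i - b m)

lemma D_ne_zero (k i : ℕ) : D k i ≠ 0 := by
  unfold D
  apply Finset.prod_ne_zero_iff.mpr
  intro m hm
  have : m ≠ i := (Finset.mem_erase.mp hm).1
  have := b_strictAnti.injective
  intro h
  exact this (by linarith [sub_eq_zero.mp h] : b i = b m) |> fun e => ‹m ≠ i› e.symm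

lemma card_erase (k i : ℕ) (hi : i < k) : ((range k).erase i).card = k - 1 := by
  rw [Finset.card_erase_of_mem (by simpa using hi), card_range]

lemma natDegree_P (k i : ℕ) (hi : i < k) : (P k i).natDegree = k - 1 := by
  unfold P
  rw [Polynomial.natDegree_prod _ _ (fun m _ => X_sub_C_ne_zero (b m))]
  simp [card_erase k i hi]

lemma natDegree_Q (k i : ℕ) (hi : i < k) : (Q k i).natDegree = k - 1 := by
  unfold Q
  rw [Polynomial.natDegree_prod _ _ (fun m _ => X_add_C_ne_zero (b m))]
  simp [card_erase k i hi]

lemma eval_P_self (k i : ℕ) : (P k i).eval (b i) = D k i := by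
  unfold P D; rw [eval_prod]; simp

lemma eval_P_ne (k i j : ℕ) (hj : j < k) (hne : j ≠ i) : (P k i).eval (b j) = 0 := by
  unfold P
  rw [eval_prod]
  apply Finset.prod_eq_zero (i := j) (by simp [Finset.mem_erase, hne, hj])
  simp

lemma eval_Q_one (k i : ℕ) : (Q k i).eval 1 = ∏ m ∈ (range k).erase i, (1 + b m) := by
  unfold Q; rw [eval_prod]; simp


lemma one_sub_b_pos (t : ℕ) : (0:ℝ) < 1 - b t := by
  have : b t ≤ 1/2 := by
    unfold b
    rw [inv_le_comm₀ (by positivity) (by norm_num)]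
    calc ((1:ℝ)/2)⁻¹ = 2^1 := by norm_num
    _ ≤ 2^(t+1) := by apply pow_le_pow_right₀ (by norm_num); omega
  linarith

lemma erase_split (k i : ℕ) (hi : i < k) :
    (range k).erase i = range i ∪ Ico (i+1) k := by
  ext m; simp only [Finset.mem_erase, mem_range, Finset.mem_union, Finset.mem_Ico]; omega

lemma prod_b_range (i : ℕ) : ∏ t ∈ range i, b t = (((2:ℝ)) ^ (∑ t ∈ range i, (t+1)))⁻¹ := by
  unfold b
  rw [Finset.prod_inv_distrib, Finset.prod_pow_eq_pow_sum]

lemma b_sub_lower (i t : ℕ) (h : t < i) : b i = b t * ((2:ℝ)^(i-t))⁻¹ := by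
  unfold b
  have h2 : i + 1 = (t+1) + (i-t) := by omega
  rw [h2, pow_add, mul_inv]

lemma D_lower (k i : ℕ) (hi : i < k) :
    (4725/16384 : ℝ)^2 *
      (((2:ℝ) ^ (∑ t ∈ range i, (t+1)))⁻¹ * ((2:ℝ)^((i+1)*(k-(i+1))))⁻¹) ≤ |D k i| := by
  have habs : |D k i| = ∏ m ∈ (range k).erase i, |b i - b m| := by
    unfold D; rw [Finset.abs_prod]
  have hdisj : Disjoint (range i) (Ico (i+1) k) := by
    simp only [Finset.disjoint_left, mem_range, Finset.mem_Ico]; omega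
  rw [habs, erase_split k i hi, Finset.prod_union hdisj]
  have h1 : ∏ t ∈ range i, |b i - b t|
      = (∏ t ∈ range i, b t) * ∏ t ∈ range i, (1 - ((2:ℝ)^(i-t))⁻¹) := by
    rw [← Finset.prod_mul_distrib]
    apply Finset.prod_congr rfl
    intro t ht
    rw [mem_range] at ht
    have h := b_sub_lower i t ht
    have hx : ((2:ℝ)^(i-t))⁻¹ < 1 := by
      rw [inv_lt_one_iff₀]
      right
      apply one_lt_pow₀ (by norm_num)
      omega
    rw [abs_sub_comm, abs_of_pos]
    · rw [h]; ring
    · rw [h]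
      have := b_pos t
      nlinarith
  have h1b : ∏ t ∈ range i, (1 - ((2:ℝ)^(i-t))⁻¹) = ∏ d ∈ range i, (1 - b d) := by
    rw [← Finset.prod_range_reflect (fun d => 1 - b d) i]
    apply Finset.prod_congr rfl
    intro j hj
    rw [mem_range] at hj
    unfold b
    have h2 : i - j = (i - 1 - j) + 1 := by omega
    rw [h2]
  have h2 : ∏ m ∈ Ico (i+1) k, |b i - b m|
      = (b i)^(k-(i+1)) * ∏ t ∈ range (k-(i+1)), (1 - b t) := by
    rw [Finset.prod_Ico_eq_prod_range]
    have : ∀ t, b (i+1+t) = b i * b t := by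
      intro t
      unfold b
      have h3 : (i+1+t)+1 = ((i+1))+(t+1) := by omega
      rw [h3, pow_add, mul_inv]
    calc ∏ t ∈ range (k-(i+1)), |b i - b (i+1+t)|
        = ∏ t ∈ range (k-(i+1)), (b i * (1 - b t)) := by
          apply Finset.prod_congr rfl
          intro t _
          rw [this t, abs_of_pos]
          · ring
          · nlinarith [b_pos i, b_pos t, one_sub_b_pos t]
      _ = (b i)^(k-(i+1)) * ∏ t ∈ range (k-(i+1)), (1 - b t) := by
          rw [Finset.prod_mul_distrib, Finset.prod_const, card_range]
  rw [h1, h1b, h2, prod_b_range]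
  have hbi : (b i)^(k-(i+1)) = ((2:ℝ)^((i+1)*(k-(i+1))))⁻¹ := by
    unfold b
    rw [inv_pow, ← pow_mul]
  rw [hbi]
  have hG1 := prod_one_sub_ge i
  have hG2 := prod_one_sub_ge (k-(i+1))
  have hX : (0:ℝ) < ((2:ℝ) ^ (∑ t ∈ range i, (t+1)))⁻¹ := by positivity
  have hY : (0:ℝ) < ((2:ℝ)^((i+1)*(k-(i+1))))⁻¹ := by positivity
  have hC : (0:ℝ) < 4725/16384 := by norm_num
  have hGG : (4725/16384:ℝ)^2 ≤ (∏ d ∈ range i, (1 - b d)) * ∏ t ∈ range (k-(i+1)), (1 - b t) := by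
    nlinarith [hG1, hG2]
  calc (4725/16384 : ℝ)^2 * (((2:ℝ) ^ (∑ t ∈ range i, (t+1)))⁻¹ * ((2:ℝ)^((i+1)*(k-(i+1))))⁻¹)
      ≤ ((∏ d ∈ range i, (1 - b d)) * ∏ t ∈ range (k-(i+1)), (1 - b t)) *
        (((2:ℝ) ^ (∑ t ∈ range i, (t+1)))⁻¹ * ((2:ℝ)^((i+1)*(k-(i+1))))⁻¹) := by
        apply mul_le_mul_of_nonneg_right hGG (le_of_lt (mul_pos hX hY))
    _ = ((2 ^ ∑ t ∈ range i, (t + 1))⁻¹ * ∏ d ∈ range i, (1 - b d)) *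
      ((2 ^ ((i + 1) * (k - (i + 1))))⁻¹ * ∏ t ∈ range (k - (i + 1)), (1 - b t)) := by ring


lemma sum_abs_coeff (k i : ℕ) (hk : 1 ≤ k) (hi : i < k) :
    ∑ r ∈ range k, |(P k i).coeff r| ≤ (75735/31744 : ℝ) := by
  have h1 : ∑ r ∈ range k, |(P k i).coeff r| = ∑ r ∈ range k, (Q k i).coeff r := by
    apply Finset.sum_congr rfl
    intro r hr
    rw [mem_range] at hr
    exact abs_coeff_eq (fun m _ => le_of_lt (b_pos m))
      (by rw [card_erase k i hi]; omega)
  have h2 : (Q k i).eval 1 = ∑ r ∈ range k, (Q k i).coeff r := by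
    rw [Polynomial.eval_eq_sum_range' (n := k) (by rw [natDegree_Q k i hi]; omega)]
    simp
  rw [h1, ← h2, eval_Q_one]
  calc ∏ m ∈ (range k).erase i, (1 + b m) ≤ ∏ m ∈ range k, (1 + b m) := by
        rw [← Finset.prod_erase_mul (range k) _ (by simpa using hi : i ∈ range k)]
        have hpos : (0:ℝ) ≤ ∏ m ∈ (range k).erase i, (1 + b m) :=
          Finset.prod_nonneg fun m _ => by nlinarith [b_pos m]
        nlinarith [b_pos i, hpos]
    _ ≤ (75735/31744 : ℝ) := prod_one_add_le k


lemma gauss (n : ℕ) : 2 * ∑ t ∈ range n, (t+1) = (n+1)*n := by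
  induction n with
  | zero => rfl
  | succ n ih => rw [Finset.sum_range_succ, Nat.mul_add, ih]; ring


end VandAux

open VandAux Polynomial Finset

/-- The `k × k` Vandermonde-type matrix with entries `M_{ij} = 2^{-ij}` (indices
`1 ≤ i, j ≤ k`, here realized zero-based as `i.1+1`, `j.1+1`) is invertible, and the
row sums of the absolute values of its inverse satisfy
`∑_j |(M⁻¹)_{ij}| ≤ 30 · 2^{k i − i(i−1)/2}`. -/
theorem vandermonde_inverse_row_bound (k : ℕ) (hk : 1 ≤ k)
    (M : Matrix (Fin k) (Fin k) ℝ)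
    (hM : ∀ i j : Fin k, M i j = ((2 : ℝ) ^ ((i.1 + 1) * (j.1 + 1)))⁻¹) :
    IsUnit M ∧
      ∀ i : Fin k,
        ∑ j : Fin k, |M⁻¹ i j| ≤
          30 * 2 ^ (k * (i.1 + 1)) / 2 ^ ((i.1 + 1) * i.1 / 2) := by
  have hb2 : ∀ j r : Fin k, ((2 : ℝ) ^ ((r.1 + 1) * (j.1 + 1)))⁻¹ = (b j.1)^(r.1+1) := by
    intro j r
    unfold b
    rw [inv_pow, ← pow_mul, Nat.mul_comm]
  set N : Matrix (Fin k) (Fin k) ℝ :=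
    Matrix.of fun i r => (P k i.1).coeff r.1 / (D k i.1 * b i.1) with hN
  have hdeg : ∀ i : Fin k, (P k i.1).natDegree < k := by
    intro i; rw [natDegree_P k i.1 i.2]; omega
  have hNM : N * M = 1 := by
    ext i j
    rw [Matrix.mul_apply]
    have hsum : ∑ r : Fin k, N i r * M r j
        = (P k i.1).eval (b j.1) * (b j.1 / (D k i.1 * b i.1)) := by
      rw [Polynomial.eval_eq_sum_range' (hdeg i), Finset.sum_mul,
        ← Fin.sum_univ_eq_sum_range (fun r => (P k i.1).coeff r * b j.1 ^ r * (b j.1 / (D k i.1 * b i.1))) k]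
      apply Finset.sum_congr rfl
      intro r _
      rw [hM, hb2, hN, Matrix.of_apply, pow_succ]
      ring
    rw [hsum]
    by_cases h : i = j
    · subst h
      rw [Matrix.one_apply_eq, eval_P_self]
      have h1 := D_ne_zero k i.1
      have h2 := (b_pos i.1).ne'
      field_simp
    · rw [Matrix.one_apply_ne' (fun e => h e.symm), eval_P_ne k i.1 j.1 j.2
        (fun e => h (Fin.ext e.symm : i = j)), zero_mul]
  have hMN : M * N = 1 := mul_eq_one_comm.mpr hNM
  have hInv : M⁻¹ = N := Matrix.inv_eq_left_inv hNM
  refine ⟨⟨⟨M, N, hMN, hNM⟩, rfl⟩, ?_⟩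
  intro i
  rw [hInv]
  set s : ℕ := ∑ t ∈ range i.1, (t+1) with hs
  have hEs : (s + (i.1+1)*(k-(i.1+1)) + (i.1+1)) + s = k * (i.1 + 1) := by
    have hg : 2 * s = (i.1+1) * i.1 := gauss i.1
    have hik : i.1 + 1 ≤ k := i.2
    zify [hik]
    have hgz : 2 * (s:ℤ) = (i.1+1) * i.1 := by exact_mod_cast hg
    linear_combination hgz
  have hs' : (i.1 + 1) * i.1 / 2 = s := by
    have hg : 2 * s = (i.1+1) * i.1 := gauss i.1
    omega
  -- row sum computation
  have habsD : 0 < |D k i.1| := abs_pos.mpr (D_ne_zero k i.1)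
  have hXpos : 0 < |D k i.1| * b i.1 := mul_pos habsD (b_pos i.1)
  set E : ℕ := s + (i.1+1)*(k-(i.1+1)) + (i.1+1) with hEdef
  have hrowsum : ∑ j : Fin k, |N i j|
      = (∑ r ∈ range k, |(P k i.1).coeff r|) / (|D k i.1| * b i.1) := by
    rw [Finset.sum_div,
      ← Fin.sum_univ_eq_sum_range (fun r => |(P k i.1).coeff r| / (|D k i.1| * b i.1)) k]
    apply Finset.sum_congr rfl
    intro j _
    rw [hN, Matrix.of_apply, abs_div, abs_mul, abs_of_pos (b_pos i.1)]
  have hW : ((2:ℝ) ^ s)⁻¹ * ((2:ℝ)^((i.1+1)*(k-(i.1+1))))⁻¹ * b i.1 = ((2:ℝ)^E)⁻¹ := by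
    rw [hEdef]
    unfold b
    rw [pow_add, pow_add, mul_inv, mul_inv]
    ring
  have hXlow : (4725/16384:ℝ)^2 / ((2:ℝ)^E) ≤ |D k i.1| * b i.1 := by
    have h1 := mul_le_mul_of_nonneg_right (D_lower k i.1 i.2) (b_pos i.1).le
    calc (4725/16384:ℝ)^2 / ((2:ℝ)^E)
        = (4725/16384:ℝ)^2 * (((2:ℝ) ^ s)⁻¹ * ((2:ℝ)^((i.1+1)*(k-(i.1+1))))⁻¹) * b i.1 := by
          rw [div_eq_mul_inv, ← hW]; ring
      _ ≤ |D k i.1| * b i.1 := h1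
  have h2E : (0:ℝ) < 2^E := by positivity
  have h30 : ∑ j : Fin k, |N i j|
      ≤ (75735/31744:ℝ) / ((4725/16384:ℝ)^2 / ((2:ℝ)^E)) := by
    rw [hrowsum]
    exact div_le_div₀ (by norm_num) (sum_abs_coeff k i.1 hk i.2) (by positivity) hXlow
  calc ∑ j : Fin k, |N i j|
      ≤ (75735/31744:ℝ) / ((4725/16384:ℝ)^2 / ((2:ℝ)^E)) := h30
    _ = (75735/31744:ℝ) * ((2:ℝ)^E) / (4725/16384:ℝ)^2 := div_div_eq_mul_div _ _ _
    _ ≤ 30 * 2^E := by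
        rw [div_le_iff₀ (by norm_num)]
        nlinarith [h2E]
    _ = 30 * 2 ^ (k * (i.1 + 1)) / 2 ^ ((i.1 + 1) * i.1 / 2) := by
        rw [hs', ← hEs, pow_add 2 E s, ← mul_assoc,
          mul_div_cancel_right₀ _ (by positivity : ((2:ℝ)^s) ≠ 0)]
end

section
/- For all integers 1 ≤ i ≤ k, the following identity holds: 2^{−i} · ∏_{m=1, m≠i}^{k} |2^{−m} − 2^{−i}| = 2^{−i(i+1)/2 − i(k−i)} · ∏_{m=1}^{i−1} (1 − 2^{−m}) · ∏_{m=1}^{k−i} (1 − 2^{−m}). -/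
open Finset

/-!
Write `x = 1/2`. For `m < i` one has `|x^m - x^i| = x^m (1 - x^(i-m))`, and for `m > i`
one has `|x^m - x^i| = x^i (1 - x^(m-i))`, since `0 ≤ x ≤ 1`. Splitting the product at `i`,
reflecting `m ↦ i - m` below `i` and shifting `m ↦ m - i` above it turns the factors
`1 - x^(·)` into the two products on the right, while the powers of `x` collect to
`x^(1 + ⋯ + i) · (x^i)^(k-i)`.
-/

section Reindexing

variable {M : Type*} [CommMonoid M]

theorem prod_Icc_one_reflect (f : ℕ → M) (n : ℕ) :
    ∏ m ∈ Icc 1 (n - 1), f (n - m) = ∏ m ∈ Icc 1 (n - 1), f m :=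
  prod_nbij' (n - ·) (n - ·) (by intro a; simp only [mem_Icc]; omega)
    (by intro a; simp only [mem_Icc]; omega) (by intro a; simp only [mem_Icc]; omega)
    (by intro a; simp only [mem_Icc]; omega) (fun _ _ => rfl)

theorem prod_Icc_sub_shift (f : ℕ → M) (i k : ℕ) :
    ∏ m ∈ Icc (i + 1) k, f (m - i) = ∏ m ∈ Icc 1 (k - i), f m :=
  prod_nbij' (· - i) (· + i) (by intro a; simp only [mem_Icc]; omega)
    (by intro a; simp only [mem_Icc]; omega) (by intro a; simp only [mem_Icc]; omega)
    (by intro a; simp only [mem_Icc]; omega) (fun _ _ => rfl)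

theorem prod_erase_Icc_one (f : ℕ → M) {i k : ℕ} (hik : i ≤ k) :
    ∏ m ∈ (Icc 1 k).erase i, f m = (∏ m ∈ Icc 1 (i - 1), f m) * ∏ m ∈ Icc (i + 1) k, f m := by
  have hsplit : (Icc 1 k).erase i = Icc 1 (i - 1) ∪ Icc (i + 1) k := by
    ext m; simp only [mem_erase, mem_Icc, mem_union]; omega
  have hdisj : Disjoint (Icc 1 (i - 1)) (Icc (i + 1) k) := by
    rw [disjoint_left]; intro m; simp only [mem_Icc]; omega
  rw [hsplit, prod_union hdisj]

end Reindexing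

theorem sum_Icc_one_id (n : ℕ) : ∑ m ∈ Icc 1 n, m = n * (n + 1) / 2 := by
  induction n with
  | zero => simp
  | succ n ih =>
    rw [sum_Icc_succ_top (by omega), ih]
    have h2 : 2 ∣ n * (n + 1) := (Nat.even_mul_succ_self n).two_dvd
    have key : (n + 1) * (n + 1 + 1) = n * (n + 1) + 2 * (n + 1) := by ring
    omega

theorem pow_mul_prod_Icc_pred_pow {M : Type*} [CommMonoid M] (x : M) (i : ℕ) :
    x ^ i * ∏ m ∈ Icc 1 (i - 1), x ^ m = x ^ (i * (i + 1) / 2) := by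
  rw [prod_pow_eq_pow_sum, ← sum_Icc_one_id, ← pow_add]
  cases i with
  | zero => simp
  | succ n => rw [sum_Icc_succ_top (by omega), Nat.add_sub_cancel, add_comm]

section Ordered

variable {R : Type*} [CommRing R] [LinearOrder R] [IsStrictOrderedRing R] {x : R}

theorem abs_pow_sub_pow_of_le (hx0 : 0 ≤ x) (hx1 : x ≤ 1) {m n : ℕ} (hmn : m ≤ n) :
    |x ^ m - x ^ n| = x ^ m * (1 - x ^ (n - m)) := by
  have hsplit : x ^ m - x ^ n = x ^ m * (1 - x ^ (n - m)) := by
    rw [mul_sub, mul_one, ← pow_add, Nat.add_sub_cancel' hmn]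
  rw [hsplit, abs_of_nonneg]
  exact mul_nonneg (pow_nonneg hx0 m) (sub_nonneg.mpr (pow_le_one₀ hx0 hx1))

theorem prod_Icc_abs_pow_sub_pow_below (hx0 : 0 ≤ x) (hx1 : x ≤ 1) (i : ℕ) :
    ∏ m ∈ Icc 1 (i - 1), |x ^ m - x ^ i| =
      (∏ m ∈ Icc 1 (i - 1), x ^ m) * ∏ m ∈ Icc 1 (i - 1), (1 - x ^ m) := by
  rw [← prod_Icc_one_reflect (fun m => 1 - x ^ m), ← prod_mul_distrib]
  refine prod_congr rfl fun m hm => abs_pow_sub_pow_of_le hx0 hx1 ?_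
  simp only [mem_Icc] at hm
  omega

theorem prod_Icc_abs_pow_sub_pow_above (hx0 : 0 ≤ x) (hx1 : x ≤ 1) (i k : ℕ) :
    ∏ m ∈ Icc (i + 1) k, |x ^ m - x ^ i| =
      (x ^ i) ^ (k - i) * ∏ m ∈ Icc 1 (k - i), (1 - x ^ m) := by
  have hcard : #(Icc (i + 1) k) = k - i := by rw [Nat.card_Icc]; omega
  rw [← prod_Icc_sub_shift (fun m => 1 - x ^ m), ← hcard, ← prod_const, ← prod_mul_distrib]
  refine prod_congr rfl fun m hm => ?_
  simp only [mem_Icc] at hm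
  rw [abs_sub_comm, abs_pow_sub_pow_of_le hx0 hx1 (by omega)]

theorem pow_mul_prod_erase_Icc_abs_pow_sub_pow (hx0 : 0 ≤ x) (hx1 : x ≤ 1) {i k : ℕ}
    (hik : i ≤ k) :
    x ^ i * ∏ m ∈ (Icc 1 k).erase i, |x ^ m - x ^ i| =
      x ^ (i * (i + 1) / 2 + i * (k - i)) * (∏ m ∈ Icc 1 (i - 1), (1 - x ^ m)) *
        ∏ m ∈ Icc 1 (k - i), (1 - x ^ m) := by
  rw [prod_erase_Icc_one _ hik, prod_Icc_abs_pow_sub_pow_below hx0 hx1,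
    prod_Icc_abs_pow_sub_pow_above hx0 hx1, pow_add, ← pow_mul_prod_Icc_pred_pow, pow_mul]
  ring

end Ordered

theorem node_distance_product_identity_general (k i : ℕ) (h2 : i ≤ k) :
    ((2 : ℝ) ^ i)⁻¹ *
        ∏ m ∈ (Finset.Icc 1 k).erase i, |((2 : ℝ) ^ m)⁻¹ - ((2 : ℝ) ^ i)⁻¹| =
      ((2 : ℝ) ^ (i * (i + 1) / 2 + i * (k - i)))⁻¹ *
        (∏ m ∈ Finset.Icc 1 (i - 1), (1 - ((2 : ℝ) ^ m)⁻¹)) *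
        ∏ m ∈ Finset.Icc 1 (k - i), (1 - ((2 : ℝ) ^ m)⁻¹) := by
  simp only [← inv_pow]
  exact pow_mul_prod_erase_Icc_abs_pow_sub_pow (by norm_num) (by norm_num) h2

/-- For `1 ≤ i ≤ k`,
`2^{-i} · ∏_{m ∈ {1,…,k}, m ≠ i} |2^{-m} − 2^{-i}|
  = 2^{-i(i+1)/2 − i(k−i)} · ∏_{m=1}^{i-1} (1 − 2^{-m}) · ∏_{m=1}^{k-i} (1 − 2^{-m})`. -/
theorem node_distance_product_identity (k i : ℕ) (h1 : 1 ≤ i) (h2 : i ≤ k) :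
    ((2 : ℝ) ^ i)⁻¹ *
        ∏ m ∈ (Finset.Icc 1 k).erase i, |((2 : ℝ) ^ m)⁻¹ - ((2 : ℝ) ^ i)⁻¹| =
      ((2 : ℝ) ^ (i * (i + 1) / 2 + i * (k - i)))⁻¹ *
        (∏ m ∈ Finset.Icc 1 (i - 1), (1 - ((2 : ℝ) ^ m)⁻¹)) *
        ∏ m ∈ Finset.Icc 1 (k - i), (1 - ((2 : ℝ) ^ m)⁻¹) :=
  node_distance_product_identity_general k i h2
end

section
/- For every d×d complex matrix A (d = 2^n): Σ_{Q ∈ P_n} (Q A Q) ⊗ (Q A Q) = Σ_{P ∈ P_n} tr(PA)² · (P ⊗ P), where ⊗ denotes the Kronecker product of d×d matrices. -/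
open Matrix Kronecker

noncomputable section

/-- The four 2×2 Pauli matrices: `0 ↦ I`, `1 ↦ X`, `2 ↦ Y`, `3 ↦ Z`. -/
def pauli1 : Fin 4 → Matrix (Fin 2) (Fin 2) ℂ
  | 0 => !![1, 0; 0, 1]
  | 1 => !![0, 1; 1, 0]
  | 2 => !![0, -Complex.I; Complex.I, 0]
  | 3 => !![1, 0; 0, -1]

/-- The `n`-qubit Pauli operator associated to the string `s : Fin n → Fin 4`. -/
def PauliOp (n : ℕ) (s : Fin n → Fin 4) :
    Matrix (Fin n → Fin 2) (Fin n → Fin 2) ℂ :=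
  Matrix.of fun i j => ∏ a, pauli1 (s a) (i a) (j a)

/-- Gaussian-integer avatar of the Pauli matrix entries. -/
def pauliG : Fin 4 → Fin 2 → Fin 2 → GaussianInt
  | 0, 0, 0 => 1 | 0, 1, 1 => 1
  | 1, 0, 1 => 1 | 1, 1, 0 => 1
  | 2, 0, 1 => ⟨0, -1⟩ | 2, 1, 0 => ⟨0, 1⟩
  | 3, 0, 0 => 1 | 3, 1, 1 => -1
  | _, _, _ => 0

lemma keyG : ∀ a b c d e f g h : Fin 2,
    ∑ q : Fin 4, pauliG q a b * pauliG q c d * pauliG q e f * pauliG q g h =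
    ∑ q : Fin 4, pauliG q c b * pauliG q g f * pauliG q a d * pauliG q e h := by decide

lemma pauli1_eq (q : Fin 4) (a b : Fin 2) :
    pauli1 q a b = GaussianInt.toComplex (pauliG q a b) := by
  fin_cases q <;> fin_cases a <;> fin_cases b <;>
    simp [pauli1, pauliG, GaussianInt.toComplex_def]

lemma keyC (a b c d e f g h : Fin 2) :
    ∑ q : Fin 4, pauli1 q a b * pauli1 q c d * pauli1 q e f * pauli1 q g h =
    ∑ q : Fin 4, pauli1 q c b * pauli1 q g f * pauli1 q a d * pauli1 q e h := by
  simp only [pauli1_eq, ← _root_.map_mul, ← map_sum]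
  exact congrArg _ (keyG a b c d e f g h)

lemma sum_prod_fin {n : ℕ} (f : Fin n → Fin 4 → ℂ) :
    ∑ s : Fin n → Fin 4, ∏ a, f a (s a) = ∏ a, ∑ q, f a q := by
  rw [Finset.prod_univ_sum, Fintype.piFinset_univ]

lemma sum4 {n : ℕ} (x1 y1 x2 y2 x3 y3 x4 y4 : Fin n → Fin 2) :
    ∑ s : Fin n → Fin 4,
      PauliOp n s x1 y1 * PauliOp n s x2 y2 * PauliOp n s x3 y3 * PauliOp n s x4 y4 =
    ∏ a, ∑ q : Fin 4, pauli1 q (x1 a) (y1 a) * pauli1 q (x2 a) (y2 a) *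
        pauli1 q (x3 a) (y3 a) * pauli1 q (x4 a) (y4 a) := by
  rw [← sum_prod_fin]
  refine Finset.sum_congr rfl fun s _ => ?_
  simp only [PauliOp, Matrix.of_apply, ← Finset.prod_mul_distrib]

lemma key_sum {n : ℕ} (i j i' j' k l k' l' : Fin n → Fin 2) :
    ∑ s : Fin n → Fin 4,
        PauliOp n s i k * PauliOp n s l j * PauliOp n s i' k' * PauliOp n s l' j' =
    ∑ s : Fin n → Fin 4,
        PauliOp n s l k * PauliOp n s l' k' * PauliOp n s i j * PauliOp n s i' j' := by
  rw [sum4, sum4]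
  exact Finset.prod_congr rfl fun a _ => keyC _ _ _ _ _ _ _ _

lemma sum_swap3 {M : Type*} [AddCommMonoid M] {α β : Type*} [Fintype α] [Fintype β]
    (g : α → β → β → M) :
    ∑ s : α, ∑ a, ∑ b, g s a b = ∑ a, ∑ b, ∑ s, g s a b := by
  rw [Finset.sum_comm]
  exact Finset.sum_congr rfl fun a _ => Finset.sum_comm

/-- For every `d × d` complex matrix `A` (`d = 2^n`),
`∑_{Q ∈ 𝒫_n} (QAQ) ⊗ (QAQ) = ∑_{P ∈ 𝒫_n} tr(PA)² · (P ⊗ P)`. -/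
theorem pauli_conjugation_twirl (n : ℕ) (hn : 1 ≤ n)
    (A : Matrix (Fin n → Fin 2) (Fin n → Fin 2) ℂ) :
    ∑ s : Fin n → Fin 4,
        (PauliOp n s * A * PauliOp n s) ⊗ₖ (PauliOp n s * A * PauliOp n s) =
      ∑ s : Fin n → Fin 4,
        (Matrix.trace (PauliOp n s * A)) ^ 2 • (PauliOp n s ⊗ₖ PauliOp n s) := by
  ext ⟨i, i'⟩ ⟨j, j'⟩
  simp only [Matrix.sum_apply, Matrix.kroneckerMap_apply, Matrix.smul_apply, smul_eq_mul]
  have hQAQ : ∀ (Q : Matrix (Fin n → Fin 2) (Fin n → Fin 2) ℂ) x y,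
      (Q * A * Q) x y =
        ∑ p : (Fin n → Fin 2) × (Fin n → Fin 2), Q x p.2 * A p.2 p.1 * Q p.1 y := by
    intro Q x y
    rw [Fintype.sum_prod_type]
    simp only [Matrix.mul_apply, Finset.sum_mul]
  have htr : ∀ (Q : Matrix (Fin n → Fin 2) (Fin n → Fin 2) ℂ),
      Matrix.trace (Q * A) =
        ∑ p : (Fin n → Fin 2) × (Fin n → Fin 2), Q p.1 p.2 * A p.2 p.1 := by
    intro Q
    rw [Fintype.sum_prod_type]
    simp only [Matrix.trace, Matrix.diag_apply, Matrix.mul_apply]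
  calc
    ∑ s : Fin n → Fin 4,
        (PauliOp n s * A * PauliOp n s) i j * (PauliOp n s * A * PauliOp n s) i' j'
      = ∑ s : Fin n → Fin 4, ∑ p : (Fin n → Fin 2) × (Fin n → Fin 2),
          ∑ p' : (Fin n → Fin 2) × (Fin n → Fin 2),
          (PauliOp n s i p.2 * A p.2 p.1 * PauliOp n s p.1 j) *
            (PauliOp n s i' p'.2 * A p'.2 p'.1 * PauliOp n s p'.1 j') := by
        refine Finset.sum_congr rfl fun s _ => ?_
        rw [hQAQ, hQAQ, Finset.sum_mul_sum]
    _ = ∑ p : (Fin n → Fin 2) × (Fin n → Fin 2),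
          ∑ p' : (Fin n → Fin 2) × (Fin n → Fin 2),
          (A p.2 p.1 * A p'.2 p'.1) *
            ∑ s : Fin n → Fin 4,
              PauliOp n s i p.2 * PauliOp n s p.1 j *
                PauliOp n s i' p'.2 * PauliOp n s p'.1 j' := by
        rw [sum_swap3]
        refine Finset.sum_congr rfl fun p _ => Finset.sum_congr rfl fun p' _ => ?_
        rw [Finset.mul_sum]
        exact Finset.sum_congr rfl fun s _ => by ring
    _ = ∑ p : (Fin n → Fin 2) × (Fin n → Fin 2),
          ∑ p' : (Fin n → Fin 2) × (Fin n → Fin 2),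
          (A p.2 p.1 * A p'.2 p'.1) *
            ∑ s : Fin n → Fin 4,
              PauliOp n s p.1 p.2 * PauliOp n s p'.1 p'.2 *
                PauliOp n s i j * PauliOp n s i' j' := by
        refine Finset.sum_congr rfl fun p _ => Finset.sum_congr rfl fun p' _ => ?_
        rw [key_sum]
    _ = ∑ s : Fin n → Fin 4, ∑ p : (Fin n → Fin 2) × (Fin n → Fin 2),
          ∑ p' : (Fin n → Fin 2) × (Fin n → Fin 2),
          (PauliOp n s p.1 p.2 * A p.2 p.1) * (PauliOp n s p'.1 p'.2 * A p'.2 p'.1) *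
            (PauliOp n s i j * PauliOp n s i' j') := by
        rw [sum_swap3]
        refine Finset.sum_congr rfl fun p _ => Finset.sum_congr rfl fun p' _ => ?_
        rw [Finset.mul_sum]
        exact Finset.sum_congr rfl fun s _ => by ring
    _ = ∑ s : Fin n → Fin 4,
          Matrix.trace (PauliOp n s * A) ^ 2 * (PauliOp n s i j * PauliOp n s i' j') := by
        refine Finset.sum_congr rfl fun s _ => ?_
        rw [htr, sq, Finset.sum_mul_sum]
        simp only [Finset.sum_mul]
end
end
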